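/- arXiv:2404.08158 — 2 statements merged into one kernel-verified Lean document; each statement's English description precedes it below -/
import Mathlib

section
/- Let f : F₂ⁿ → {−1,1}, let 0 < ε < 1, and let Γ ⊆ F₂ⁿ be a nonempty set that is ε-rare with respect to f. Let γ* ∈ Γ be an element maximizing |f̂(γ)| over γ ∈ Γ. Then |f̂(γ*)| ≤ (∑_{γ ∈ Γ} f̂(γ)⁴)^{1/4} ≤ |f̂(γ*)| + √ε; in particular, the fourth root of the sum of fourth powers of the Fourier coefficients over Γ is √ε-close to the maximum absolute Fourier coefficient in Γ. -/
/-- The inner product `⟨γ,x⟩ = ∑ i, γ i * x i` over `F₂`. -/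
def inner2 {n : ℕ} (γ x : Fin n → ZMod 2) : ZMod 2 := ∑ i, γ i * x i

/-- The character `χ_γ(x) = (−1)^{⟨γ,x⟩}`. -/
noncomputable def chi {n : ℕ} (γ x : Fin n → ZMod 2) : ℝ :=
  if inner2 γ x = 0 then 1 else -1

/-- The Fourier coefficient `f̂(γ) = 2^{−n} ∑_x f(x)·χ_γ(x)`. -/
noncomputable def fhat {n : ℕ} (f : (Fin n → ZMod 2) → ℝ) (γ : Fin n → ZMod 2) : ℝ :=
  (∑ x, f x * chi γ x) / 2 ^ n

/-! By Parseval, `∑ γ, f̂(γ)² = 1` for a `±1`-valued `f`. Rarity and maximality force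
`|f̂(γ)| ≤ ε` for every `γ ≠ γ*` in `Γ`, so these contribute at most `ε² ∑ f̂(γ)² ≤ ε² = (√ε)⁴`
to the sum of fourth powers, and `a⁴ + b⁴ ≤ (a + b)⁴` gives the upper bound. -/

lemma ZMod.eq_zero_or_eq_one_of_two (a : ZMod 2) : a = 0 ∨ a = 1 := by
  revert a; decide

noncomputable def signChar : AddChar (ZMod 2) ℝ where
  toFun a := if a = 0 then 1 else -1
  map_zero_eq_one' := if_pos rfl
  map_add_eq_mul' a b := by
    obtain rfl | rfl := a.eq_zero_or_eq_one_of_two <;>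
      obtain rfl | rfl := b.eq_zero_or_eq_one_of_two <;> simp +decide

section Characters

variable {n : ℕ}

lemma inner2_eq_dotProduct (γ x : Fin n → ZMod 2) : inner2 γ x = γ ⬝ᵥ x := rfl

lemma chi_comm (γ x : Fin n → ZMod 2) : chi γ x = chi x γ := by
  rw [chi, chi, inner2_eq_dotProduct, inner2_eq_dotProduct, dotProduct_comm]

noncomputable def chiChar (γ : Fin n → ZMod 2) : AddChar (Fin n → ZMod 2) ℝ :=
  signChar.compAddMonoidHom (AddMonoidHom.mk' (inner2 γ) fun x y => dotProduct_add γ x y)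

lemma chiChar_apply (γ x : Fin n → ZMod 2) : chiChar γ x = chi γ x := rfl

lemma chi_add_right (γ x y : Fin n → ZMod 2) : chi γ (x + y) = chi γ x * chi γ y :=
  (chiChar γ).map_add_eq_mul x y

lemma chiChar_eq_zero_iff (γ : Fin n → ZMod 2) : chiChar γ = 0 ↔ γ = 0 := by
  refine ⟨fun h => ?_, fun h => ?_⟩
  · by_contra hγ
    obtain ⟨i, hi⟩ := Function.ne_iff.mp hγ
    have hγi : γ i = 1 := (γ i).eq_zero_or_eq_one_of_two.resolve_left hi
    have hchi : chi γ (Pi.single i 1) = -1 := by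
      simp [chi, inner2_eq_dotProduct, dotProduct_single, hγi]
    have := AddChar.ext_iff.mp h (Pi.single i 1)
    rw [chiChar_apply, hchi, AddChar.zero_apply] at this
    norm_num at this
  · ext x
    simp [chiChar_apply, h, chi, inner2]

lemma sum_chi (x : Fin n → ZMod 2) : ∑ γ, chi γ x = if x = 0 then 2 ^ n else 0 := by
  classical
  simp_rw [chi_comm _ x, ← chiChar_apply, AddChar.sum_eq_ite, chiChar_eq_zero_iff]
  simp

lemma sum_fhat_sq (f : (Fin n → ZMod 2) → ℝ) :
    ∑ γ, fhat f γ ^ 2 = (∑ x, f x ^ 2) / 2 ^ n := by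
  have hsq : ∀ γ, (∑ x, f x * chi γ x) ^ 2 = ∑ x, ∑ y, f x * f y * chi γ (x + y) := by
    simp only [sq, Finset.sum_mul_sum, chi_add_right, mul_mul_mul_comm, implies_true]
  have horth : ∀ x y : Fin n → ZMod 2, ∑ γ, chi γ (x + y) = if x = y then 2 ^ n else 0 := by
    simp only [sum_chi, ← ZModModule.sub_eq_add, sub_eq_zero, implies_true]
  calc ∑ γ, fhat f γ ^ 2 = (∑ x, ∑ y, f x * f y * ∑ γ, chi γ (x + y)) / (2 ^ n) ^ 2 := by
        simp only [fhat, div_pow, ← Finset.sum_div, hsq, Finset.mul_sum]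
        rw [Finset.sum_comm]
        exact congrArg (· / _) (Finset.sum_congr rfl fun x _ => Finset.sum_comm)
    _ = (∑ x, f x ^ 2) / 2 ^ n := by
        simp only [horth, mul_ite, mul_zero, Finset.sum_ite_eq, Finset.mem_univ, if_true,
          ← sq, ← Finset.sum_mul]
        field_simp

lemma sum_fhat_sq_eq_one {f : (Fin n → ZMod 2) → ℝ} (hf : ∀ x, f x = 1 ∨ f x = -1) :
    ∑ γ, fhat f γ ^ 2 = 1 := by
  have hf2 : ∀ x, f x ^ 2 = 1 := fun x => by rcases hf x with h | h <;> simp [h]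
  simp [sum_fhat_sq, hf2]

end Characters

section FourthPowers

variable {ι : Type*} {s : Finset ι} {g : ι → ℝ} {i : ι}

lemma sum_pow_four_le_sq_of_abs_le {ε : ℝ} (hsq : ∑ j ∈ s, g j ^ 2 ≤ 1)
    (hg : ∀ j ∈ s, |g j| ≤ ε) : ∑ j ∈ s, g j ^ 4 ≤ ε ^ 2 :=
  calc ∑ j ∈ s, g j ^ 4 ≤ ∑ j ∈ s, ε ^ 2 * g j ^ 2 := by
        refine Finset.sum_le_sum fun j hj => ?_
        have hsq_le : g j ^ 2 ≤ ε ^ 2 := by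
          simpa only [sq_abs] using pow_le_pow_left₀ (abs_nonneg _) (hg j hj) 2
        rw [show g j ^ 4 = g j ^ 2 * g j ^ 2 by ring]
        exact mul_le_mul_of_nonneg_right hsq_le (sq_nonneg _)
    _ = ε ^ 2 * ∑ j ∈ s, g j ^ 2 := by rw [Finset.mul_sum]
    _ ≤ ε ^ 2 := mul_le_of_le_one_right (sq_nonneg ε) hsq

lemma abs_le_sum_pow_four_rpow (hi : i ∈ s) :
    |g i| ≤ (∑ j ∈ s, g j ^ 4) ^ ((1 : ℝ) / 4) := by
  rw [one_div, Real.le_rpow_inv_iff_of_pos (abs_nonneg _)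
    (Finset.sum_nonneg fun j _ => by positivity) (by norm_num)]
  norm_cast
  rw [pow_abs, abs_of_nonneg (by positivity)]
  exact Finset.single_le_sum (f := fun j => g j ^ 4) (fun j _ => by positivity) hi

lemma sum_pow_four_rpow_le [DecidableEq ι] {ε : ℝ} (hi : i ∈ s) (hε : 0 ≤ ε)
    (hsq : ∑ j ∈ s.erase i, g j ^ 2 ≤ 1) (hg : ∀ j ∈ s.erase i, |g j| ≤ ε) :
    (∑ j ∈ s, g j ^ 4) ^ ((1 : ℝ) / 4) ≤ |g i| + √ε := by
  rw [one_div, Real.rpow_inv_le_iff_of_pos (Finset.sum_nonneg fun j _ => by positivity)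
    (by positivity) (by norm_num)]
  norm_cast
  calc ∑ j ∈ s, g j ^ 4 = |g i| ^ 4 + ∑ j ∈ s.erase i, g j ^ 4 := by
        rw [← Finset.add_sum_erase s _ hi, pow_abs, abs_of_nonneg (by positivity)]
    _ ≤ |g i| ^ 4 + (√ε ^ 2) ^ 2 := by
        rw [Real.sq_sqrt hε]
        exact add_le_add_right (sum_pow_four_le_sq_of_abs_le hsq hg) _
    _ ≤ (|g i| + √ε) ^ 4 := by
        rw [← pow_mul]
        exact pow_add_pow_le (abs_nonneg _) (Real.sqrt_nonneg ε) (by norm_num)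

end FourthPowers

theorem l4_close_to_max_general (n : ℕ) (f : (Fin n → ZMod 2) → ℝ) (hf : ∀ x, f x = 1 ∨ f x = -1)
    (ε : ℝ) (hε0 : 0 < ε)
    (Γ : Finset (Fin n → ZMod 2))
    (hrare : ∀ γ₁ ∈ Γ, ∀ γ₂ ∈ Γ, ε < |fhat f γ₁| → ε < |fhat f γ₂| → γ₁ = γ₂)
    (γs : Fin n → ZMod 2) (hγs : γs ∈ Γ)
    (hmax : ∀ γ ∈ Γ, |fhat f γ| ≤ |fhat f γs|) :
    |fhat f γs| ≤ (∑ γ ∈ Γ, fhat f γ ^ 4) ^ ((1 : ℝ) / 4) ∧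
      (∑ γ ∈ Γ, fhat f γ ^ 4) ^ ((1 : ℝ) / 4) ≤ |fhat f γs| + Real.sqrt ε := by
  have hbessel : ∑ γ ∈ Γ.erase γs, fhat f γ ^ 2 ≤ 1 :=
    (Finset.sum_le_sum_of_subset_of_nonneg (Finset.subset_univ _) fun γ _ _ => sq_nonneg _).trans
      (sum_fhat_sq_eq_one hf).le
  have hsmall : ∀ γ ∈ Γ.erase γs, |fhat f γ| ≤ ε := by
    intro γ hγ
    obtain ⟨hne, hγΓ⟩ := Finset.mem_erase.mp hγ
    by_contra! hbig
    exact hne (hrare γ hγΓ γs hγs hbig (hbig.trans_le (hmax γ hγΓ)))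
  exact ⟨abs_le_sum_pow_four_rpow hγs, sum_pow_four_rpow_le hγs hε0.le hbessel hsmall⟩

/-- For an `ε`-rare set `Γ` (at most one element with `|f̂(γ)| > ε`), the fourth root of the
sum of fourth powers of Fourier coefficients over `Γ` is `√ε`-close to the maximum absolute
Fourier coefficient in `Γ`. -/
theorem l4_close_to_max (n : ℕ) (f : (Fin n → ZMod 2) → ℝ) (hf : ∀ x, f x = 1 ∨ f x = -1)
    (ε : ℝ) (hε0 : 0 < ε) (hε1 : ε < 1)
    (Γ : Finset (Fin n → ZMod 2)) (hΓ : Γ.Nonempty)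
    (hrare : ∀ γ₁ ∈ Γ, ∀ γ₂ ∈ Γ, ε < |fhat f γ₁| → ε < |fhat f γ₂| → γ₁ = γ₂)
    (γs : Fin n → ZMod 2) (hγs : γs ∈ Γ)
    (hmax : ∀ γ ∈ Γ, |fhat f γ| ≤ |fhat f γs|) :
    |fhat f γs| ≤ (∑ γ ∈ Γ, fhat f γ ^ 4) ^ ((1 : ℝ) / 4) ∧
      (∑ γ ∈ Γ, fhat f γ ^ 4) ^ ((1 : ℝ) / 4) ≤ |fhat f γs| + Real.sqrt ε :=
  l4_close_to_max_general n f hf ε hε0 Γ hrare γs hγs hmax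
end

section
/- Let X ⊆ F₂ⁿ be a nonempty finite set, let 0 < δ < 1, and let s ∈ ℕ satisfy s ≥ 2·log₂|X| + log₂(1/δ). Draw r₁,…,r_s independently and uniformly at random from F₂ⁿ. Then with probability at least 1−δ, every 'coset' V_a := {γ ∈ F₂ⁿ : ⟨γ,rᵢ⟩ = aᵢ for each i ∈ [s]} with a ∈ F₂^s contains at most one element of X (i.e., all cosets are X-rare). -/
open Finset

lemma zmod2_ne_zero {a : ZMod 2} (h : a ≠ 0) : a = 1 := by revert h; revert a; decide

lemma inner2_add {n : ℕ} (d x y : Fin n → ZMod 2) :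
    inner2 d (x + y) = inner2 d x + inner2 d y := by
  simp [inner2, mul_add, Finset.sum_add_distrib]

lemma inner2_sub_left {n : ℕ} (a b x : Fin n → ZMod 2) :
    inner2 (a - b) x = inner2 a x - inner2 b x := by
  simp [inner2, sub_mul, Finset.sum_sub_distrib]

lemma inner2_single {n : ℕ} (d : Fin n → ZMod 2) (j : Fin n) :
    inner2 d (Pi.single j 1) = d j := by
  rw [inner2, Fintype.sum_eq_single j]
  · simp
  · intro i hi; simp [Pi.single_eq_of_ne hi]

lemma card_ker {n : ℕ} (d : Fin n → ZMod 2) (hd : d ≠ 0) :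
    (univ.filter fun x : Fin n → ZMod 2 => inner2 d x = 0).card * 2 = 2 ^ n := by
  obtain ⟨j, hj⟩ := Function.ne_iff.mp hd
  have hdj : d j = 1 := zmod2_ne_zero hj
  have hinv : ∀ x : Fin n → ZMod 2, x + Pi.single j 1 + Pi.single j 1 = x := by
    intro x
    have h11 : (1:ZMod 2) + 1 = 0 := by decide
    rw [add_assoc, ← Pi.single_add, h11, Pi.single_zero, add_zero]
  have hflip : ∀ x : Fin n → ZMod 2, inner2 d (x + Pi.single j 1) = inner2 d x + 1 := by
    intro x
    rw [inner2_add, inner2_single, hdj]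
  have hbij : (univ.filter fun x : Fin n → ZMod 2 => inner2 d x = 0).card
      = (univ.filter fun x : Fin n → ZMod 2 => ¬ inner2 d x = 0).card := by
    apply Finset.card_bij' (fun x _ => x + Pi.single j 1) (fun x _ => x + Pi.single j 1)
    · intro x _; exact hinv x
    · intro x _; exact hinv x
    · intro x hx
      simp only [mem_filter, mem_univ, true_and] at hx ⊢
      rw [hflip, hx]
      decide
    · intro x hx
      simp only [mem_filter, mem_univ, true_and] at hx ⊢
      rw [hflip, zmod2_ne_zero hx]
      decide
  have := Finset.card_filter_add_card_filter_not
    (s := (univ : Finset (Fin n → ZMod 2))) (p := fun x => inner2 d x = 0)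
  rw [card_univ] at this
  have hcard : Fintype.card (Fin n → ZMod 2) = 2 ^ n := by simp
  omega

lemma count_ker {n s : ℕ} (d : Fin n → ZMod 2) (hd : d ≠ 0) :
    (univ.filter fun r : Fin s → Fin n → ZMod 2 => ∀ i, inner2 d (r i) = 0).card * 2 ^ s
      = 2 ^ (n * s) := by
  set K := univ.filter fun x : Fin n → ZMod 2 => inner2 d x = 0 with hK
  have h1 : (univ.filter fun r : Fin s → Fin n → ZMod 2 => ∀ i, inner2 d (r i) = 0)
      = Fintype.piFinset (fun _ : Fin s => K) := by
    ext r; simp [Fintype.mem_piFinset, hK]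
  rw [h1, Fintype.card_piFinset]
  simp only [prod_const, card_univ, Fintype.card_fin]
  rw [← mul_pow, card_ker d hd, ← pow_mul]

/-- If `s ≥ 2·log₂|X| + log₂(1/δ)`, then with probability at least `1 − δ` over uniformly
random `r₁,…,r_s ∈ F₂ⁿ`, every coset `V_a = {γ : ⟨γ,rᵢ⟩ = aᵢ ∀i}` contains at most one
element of `X` (all cosets are `X`-rare).  Stated by counting: the number of good tuples is
at least `(1−δ)·2^{ns}`. -/
theorem separate_whp (n s : ℕ) (X : Finset (Fin n → ZMod 2)) (hX : X.Nonempty)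
    (δ : ℝ) (hδ0 : 0 < δ) (hδ1 : δ < 1)
    (hs : 2 * Real.logb 2 (X.card : ℝ) + Real.logb 2 (1 / δ) ≤ (s : ℝ)) :
    (1 - δ) * (2 : ℝ) ^ (n * s) ≤
      ((Finset.univ.filter (fun r : Fin s → Fin n → ZMod 2 =>
        ∀ a : Fin s → ZMod 2,
          (X.filter (fun γ => ∀ i, inner2 γ (r i) = a i)).card ≤ 1)).card : ℝ) := by
  classical
  set P : (Fin s → Fin n → ZMod 2) → Prop := fun r => ∀ a : Fin s → ZMod 2,
      (X.filter (fun γ => ∀ i, inner2 γ (r i) = a i)).card ≤ 1 with hP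
  set good := univ.filter P with hgood
  set bad := univ.filter (fun r => ¬ P r) with hbad
  have hsplit : good.card + bad.card = 2 ^ (n * s) := by
    rw [hgood, hbad, Finset.card_filter_add_card_filter_not, card_univ]
    simp [pow_mul]
  set pairs := (X ×ˢ X).filter (fun p => p.1 ≠ p.2) with hpairs
  have hsub : bad ⊆ pairs.biUnion (fun p =>
      univ.filter fun r : Fin s → Fin n → ZMod 2 => ∀ i, inner2 (p.1 - p.2) (r i) = 0) := by
    intro r hr
    simp only [hbad, mem_filter, mem_univ, true_and, hP] at hr
    push_neg at hr
    obtain ⟨a, ha⟩ := hr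
    obtain ⟨γ, hγ, γ', hγ', hne⟩ := Finset.one_lt_card.mp ha
    simp only [mem_filter] at hγ hγ'
    refine Finset.mem_biUnion.mpr ⟨(γ, γ'), ?_, ?_⟩
    · simp [hpairs, hγ.1, hγ'.1, hne]
    · simp only [mem_filter, mem_univ, true_and]
      intro i
      rw [inner2_sub_left, hγ.2 i, hγ'.2 i, sub_self]
  have hbadcount : bad.card * 2 ^ s ≤ X.card ^ 2 * 2 ^ (n * s) := by
    calc bad.card * 2 ^ s
        ≤ (∑ p ∈ pairs, (univ.filter fun r : Fin s → Fin n → ZMod 2 =>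
            ∀ i, inner2 (p.1 - p.2) (r i) = 0).card) * 2 ^ s :=
          Nat.mul_le_mul_right _ ((Finset.card_le_card hsub).trans Finset.card_biUnion_le)
      _ = ∑ p ∈ pairs, ((univ.filter fun r : Fin s → Fin n → ZMod 2 =>
            ∀ i, inner2 (p.1 - p.2) (r i) = 0).card * 2 ^ s) := Finset.sum_mul ..
      _ = ∑ _p ∈ pairs, 2 ^ (n * s) := by
          refine Finset.sum_congr rfl fun p hp => ?_
          exact count_ker _ (sub_ne_zero.mpr ((mem_filter.mp hp).2))
      _ = pairs.card * 2 ^ (n * s) := by rw [Finset.sum_const, smul_eq_mul]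
      _ ≤ X.card ^ 2 * 2 ^ (n * s) := by
          refine Nat.mul_le_mul_right _ ?_
          calc pairs.card ≤ (X ×ˢ X).card := card_le_card (filter_subset _ _)
            _ = X.card ^ 2 := by rw [card_product, sq]
  -- real arithmetic
  have hXpos : (0:ℝ) < (X.card : ℝ) := by exact_mod_cast Finset.card_pos.mpr hX
  have hq : (0:ℝ) < (X.card:ℝ)^2 / δ := by positivity
  have hlog : Real.logb 2 ((X.card:ℝ)^2 / δ) ≤ (s:ℝ) := by
    rw [Real.logb_div (by positivity) hδ0.ne', Real.logb_pow]
    have h1 : Real.logb 2 (1/δ) = - Real.logb 2 δ := by rw [one_div, Real.logb_inv]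
    push_cast
    linarith
  have h2 : (X.card:ℝ)^2 / δ ≤ (2:ℝ) ^ (s:ℕ) := by
    have := Real.rpow_logb (by norm_num : (0:ℝ) < 2) (by norm_num) hq
    calc (X.card:ℝ)^2/δ = (2:ℝ) ^ Real.logb 2 ((X.card:ℝ)^2/δ) := this.symm
      _ ≤ (2:ℝ) ^ ((s:ℕ):ℝ) := Real.rpow_le_rpow_of_exponent_le one_le_two hlog
      _ = (2:ℝ) ^ (s:ℕ) := Real.rpow_natCast 2 s
  have hkey : ((X.card:ℝ))^2 ≤ δ * 2 ^ s := by
    have := (div_le_iff₀ hδ0).mp h2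
    linarith
  have hbadR : (bad.card : ℝ) ≤ δ * 2 ^ (n * s) := by
    have h1 : (bad.card:ℝ) * 2 ^ s ≤ (X.card:ℝ)^2 * 2 ^ (n*s) := by exact_mod_cast hbadcount
    have h2' : (X.card:ℝ)^2 * 2 ^ (n*s) ≤ (δ * 2 ^ s) * 2 ^ (n*s) :=
      mul_le_mul_of_nonneg_right hkey (by positivity)
    have hpos : (0:ℝ) < 2 ^ s := by positivity
    have h3 : (bad.card:ℝ) * 2 ^ s ≤ (δ * 2 ^ (n*s)) * 2 ^ s := by
      calc (bad.card:ℝ) * 2 ^ s ≤ (δ * 2 ^ s) * 2 ^ (n*s) := le_trans h1 h2'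
        _ = (δ * 2 ^ (n*s)) * 2 ^ s := by ring
    exact le_of_mul_le_mul_right h3 hpos
  have hsplitR : (good.card : ℝ) + (bad.card : ℝ) = 2 ^ (n*s) := by exact_mod_cast hsplit
  have : (1 - δ) * (2:ℝ) ^ (n*s) ≤ (good.card : ℝ) := by nlinarith
  exact this
end
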